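/- arXiv:2006.01903 — 9 statements merged into one kernel-verified Lean document; each statement's English description precedes it below -/
import Mathlib

section
/- Let M be a complete DFA over a finite alphabet Σ with finite state set and let p be any state. Then there exists a prefix-free regular language P ⊆ Σ* such that the loop language Loop_M(p) equals the Kleene star P* of P. -/
/-!
A word looping at `p` splits at its first return to `p`, so the loop language is the star of the
first-return words, which are prefix-free by minimality. They form a regular language by
Myhill–Nerode: a left quotient of the words leading from `q` to `p` that visit `p` only at their end
is empty or another such language for a different `q`, and there are only finitely many states `q`.
-/

open Computability

theorem List.forall_prefix_cons {α : Type*} {a : α} {w : List α} {P : List α → Prop} :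
    (∀ v, v <+: a :: w → P v) ↔ P [] ∧ ∀ v, v <+: w → P (a :: v) := by
  simp only [List.prefix_cons_iff, or_imp, forall_and, forall_eq, forall_exists_index, and_imp]
  rw [forall_comm]
  simp

namespace DFA

variable {α σ : Type*} (M : DFA α σ)

def firstPassage (q p : σ) : Language α :=
  {w | M.evalFrom q w = p ∧ ∀ v, v <+: w → v ≠ w → M.evalFrom q v ≠ p}

def loopLanguage (p : σ) : Language α :=
  {w | M.evalFrom p w = p}

def firstReturn (p : σ) : Language α :=
  {w | w ≠ [] ∧ M.evalFrom p w = p ∧ ∀ v, v <+: w → v ≠ [] → v ≠ w → M.evalFrom p v ≠ p}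

variable {M}

theorem mem_firstPassage {q p : σ} {w : List α} :
    w ∈ M.firstPassage q p ↔ M.evalFrom q w = p ∧ ∀ v, v <+: w → v ≠ w → M.evalFrom q v ≠ p :=
  Iff.rfl

theorem mem_loopLanguage {p : σ} {w : List α} : w ∈ M.loopLanguage p ↔ M.evalFrom p w = p :=
  Iff.rfl

theorem mem_firstReturn {p : σ} {w : List α} :
    w ∈ M.firstReturn p ↔
      w ≠ [] ∧ M.evalFrom p w = p ∧ ∀ v, v <+: w → v ≠ [] → v ≠ w → M.evalFrom p v ≠ p :=
  Iff.rfl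

theorem nil_mem_firstPassage {q p : σ} : [] ∈ M.firstPassage q p ↔ q = p := by
  simp [mem_firstPassage]

theorem cons_mem_firstPassage {q p : σ} {a : α} {w : List α} :
    a :: w ∈ M.firstPassage q p ↔ q ≠ p ∧ w ∈ M.firstPassage (M.step q a) p := by
  simp only [mem_firstPassage, evalFrom_cons, ne_eq, List.forall_prefix_cons, List.nil_eq,
    reduceCtorEq, not_false_eq_true, evalFrom_nil, forall_const, List.cons.injEq, true_and]
  tauto

theorem cons_mem_firstReturn {p : σ} {a : α} {w : List α} :
    a :: w ∈ M.firstReturn p ↔ w ∈ M.firstPassage (M.step p a) p := by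
  simp [mem_firstReturn, mem_firstPassage, List.forall_prefix_cons]

theorem leftQuotient_firstPassage_mem (q p : σ) (u : List α) :
    (M.firstPassage q p).leftQuotient u ∈ insert 0 (Set.range (M.firstPassage · p)) := by
  induction u generalizing q with
  | nil => exact Set.mem_insert_of_mem _ ⟨q, rfl⟩
  | cons a u ih =>
    by_cases hq : q = p
    · left
      ext v
      simp [cons_mem_firstPassage, hq]
    · convert ih (M.step q a) using 1
      ext v
      simp [cons_mem_firstPassage, hq]

theorem isRegular_firstReturn [Finite σ] (p : σ) : (M.firstReturn p).IsRegular := by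
  refine .of_finite_range_leftQuotient <|
    ((Set.finite_range (M.firstPassage · p)).insert 0 |>.insert (M.firstReturn p)).subset ?_
  rintro _ ⟨_ | ⟨a, u⟩, rfl⟩
  · exact Set.mem_insert _ _
  · refine Set.mem_insert_of_mem _ ?_
    convert leftQuotient_firstPassage_mem (M := M) (M.step p a) p u using 1
    ext v
    simp [cons_mem_firstReturn]

theorem eq_of_prefix_of_mem_firstReturn {p : σ} {w v : List α} (hw : w ∈ M.firstReturn p)
    (hvw : v <+: w) (hv : v ∈ M.firstReturn p) : v = w := by
  by_contra hne
  exact hw.2.2 v hvw hv.1 hne hv.2.1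

theorem exists_firstPassage_append {q p : σ} {w : List α} (h : M.evalFrom q w = p) :
    ∃ u ∈ M.firstPassage q p, ∃ v ∈ M.loopLanguage p, u ++ v = w := by
  induction w generalizing q with
  | nil => exact ⟨[], nil_mem_firstPassage.2 h, [], rfl, rfl⟩
  | cons a w ih =>
    by_cases hq : q = p
    · exact ⟨[], nil_mem_firstPassage.2 hq, a :: w, hq ▸ h, rfl⟩
    · obtain ⟨u, hu, v, hv, rfl⟩ := ih h
      exact ⟨a :: u, cons_mem_firstPassage.2 ⟨hq, hu⟩, v, hv, rfl⟩

theorem kstar_firstReturn (p : σ) : (M.firstReturn p)∗ = M.loopLanguage p := by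
  apply le_antisymm
  · refine kstar_le_of_mul_le_right (fun w (hw : w ∈ (1 : Language α)) => ?_) ?_
    · obtain rfl := (Language.mem_one w).1 hw
      rfl
    · rintro _ ⟨u, hu, v, hv, rfl⟩
      show M.evalFrom p (u ++ v) = p
      rw [evalFrom_of_append, (mem_firstReturn.1 hu).2.1, mem_loopLanguage.1 hv]
  · intro w hw
    induction hlen : w.length using Nat.strong_induction_on generalizing w with
    | _ n ih =>
    cases w with
    | nil => exact Language.nil_mem_kstar _
    | cons a t =>
      obtain ⟨u, hu, v, hv, rfl⟩ := exists_firstPassage_append (q := M.step p a) hw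
      rw [← Language.one_add_self_mul_kstar_eq_kstar]
      refine Or.inr ⟨a :: u, cons_mem_firstReturn.2 hu, v, ih v.length ?_ hv rfl, rfl⟩
      simp [← hlen]

end DFA

theorem stmt_1_general {α : Type*} {σ : Type*} [Fintype σ] (M : DFA α σ) (p : σ) :
    ∃ P : Language α,
      P.IsRegular ∧
      (∀ w ∈ P, ∀ v : List α, v <+: w → v ∈ P → v = w) ∧
      {w : List α | M.evalFrom p w = p} = P∗ :=
  ⟨M.firstReturn p, M.isRegular_firstReturn p,
    fun _ hw _ hvw hv => DFA.eq_of_prefix_of_mem_firstReturn hw hvw hv, (M.kstar_firstReturn p).symm⟩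

/-- For any complete DFA `M` with finite state set and any state
`p`, the loop language `{w | M.evalFrom p w = p}` equals `P∗` for some
prefix-free regular language `P`. -/
theorem stmt_1 {α : Type*} [Fintype α] {σ : Type*} [Fintype σ] (M : DFA α σ) (p : σ) :
    ∃ P : Language α,
      P.IsRegular ∧
      (∀ w ∈ P, ∀ v : List α, v <+: w → v ∈ P → v = w) ∧
      {w : List α | M.evalFrom p w = p} = P∗ :=
  stmt_1_general M p
end

section
/- Let M be a complete DFA over a finite alphabet Σ with finite state set, let p be a state, and let u ∈ Σ* be a word such that Loop_M(p) ⊆ {u}* (every word that loops at p is a power of u). If Loop_M(p) ≠ {ε}, then there exists n ≥ 1 such that Loop_M(p) = {(u^n)^k | k ∈ ℕ}, i.e., Loop_M(p) is exactly the set of powers of u^n. -/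
/-- The `n`-fold concatenation power of a word `u`. -/
def wordPow {α : Type*} (u : List α) : ℕ → List α
  | 0 => []
  | n + 1 => u ++ wordPow u n

lemma wordPow_add {α : Type*} (u : List α) (a b : ℕ) :
    wordPow u (a + b) = wordPow u a ++ wordPow u b := by
  induction a with
  | zero => simp [wordPow]
  | succ a ih =>
      have : a + 1 + b = (a + b) + 1 := by omega
      rw [this]
      simp [wordPow, ih]

lemma wordPow_mul {α : Type*} (u : List α) (n k : ℕ) :
    wordPow (wordPow u n) k = wordPow u (n * k) := by
  induction k with
  | zero => simp [wordPow]
  | succ k ih =>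
      have h : n * (k + 1) = n + n * k := by ring
      conv_lhs => rw [wordPow]
      rw [ih, h, wordPow_add]

lemma evalFrom_wordPow {α : Type*} {σ : Type*} (M : DFA α σ) (p : σ) (u : List α) (k : ℕ) :
    M.evalFrom p (wordPow u k) = (fun q => M.evalFrom q u)^[k] p := by
  induction k generalizing p with
  | zero => simp [wordPow, DFA.evalFrom]
  | succ k ih =>
      rw [wordPow, DFA.evalFrom_of_append, ih, Function.iterate_succ_apply]

/-- If every loop word at state `p` is a power of `u`, and the loop
language at `p` is not just `{ε}`, then the loop language is exactly the set of
powers of `u^n` for some `n ≥ 1`. -/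
theorem stmt_2 {α : Type*} [Fintype α] {σ : Type*} [Fintype σ] (M : DFA α σ) (p : σ)
    (u : List α)
    (hsub : {w : List α | M.evalFrom p w = p} ⊆ {w : List α | ∃ k : ℕ, w = wordPow u k})
    (hne : {w : List α | M.evalFrom p w = p} ≠ {([] : List α)}) :
    ∃ n : ℕ, 1 ≤ n ∧
      {w : List α | M.evalFrom p w = p} = {w : List α | ∃ k : ℕ, w = wordPow (wordPow u n) k} := by
  set f : σ → σ := fun q => M.evalFrom q u with hf
  -- there is a nonempty loop word
  have hnil : M.evalFrom p [] = p := rfl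
  have hex : ∃ k : ℕ, 0 < k ∧ f^[k] p = p := by
    by_contra hcon
    push_neg at hcon
    apply hne
    ext w
    simp only [Set.mem_setOf_eq, Set.mem_singleton_iff]
    constructor
    · intro hw
      obtain ⟨k, rfl⟩ := hsub hw
      rw [evalFrom_wordPow] at hw
      rcases Nat.eq_zero_or_pos k with h0 | h0
      · simp [h0, wordPow]
      · exact absurd hw (hcon k h0)
    · rintro rfl; exact hnil
  classical
  set d := Nat.find hex with hd
  obtain ⟨hdpos, hdfix⟩ : 0 < d ∧ f^[d] p = p := Nat.find_spec hex
  have hdvd_fix : ∀ m : ℕ, d ∣ m → f^[m] p = p := by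
    rintro m ⟨q, rfl⟩
    rw [Function.iterate_mul]
    exact Function.iterate_fixed hdfix q
  have hfix_dvd : ∀ m : ℕ, f^[m] p = p → d ∣ m := by
    intro m hm
    rcases Nat.eq_zero_or_pos (m % d) with hr | hr
    · exact Nat.dvd_of_mod_eq_zero hr
    · exfalso
      have hmd : f^[m % d] p = p := by
        have h1 : f^[d * (m / d)] p = p := hdvd_fix _ ⟨m / d, rfl⟩
        have h2 : m % d + d * (m / d) = m := by
          have := Nat.div_add_mod m d; omega
        calc f^[m % d] p = f^[m % d] (f^[d * (m / d)] p) := by rw [h1]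
          _ = f^[m % d + d * (m / d)] p := (Function.iterate_add_apply f _ _ p).symm
          _ = p := by rw [h2]; exact hm
      have := Nat.find_min hex (m := m % d) (Nat.mod_lt m hdpos)
      exact this ⟨hr, hmd⟩
  refine ⟨d, hdpos, ?_⟩
  ext w
  simp only [Set.mem_setOf_eq]
  constructor
  · intro hw
    obtain ⟨k, rfl⟩ := hsub hw
    rw [evalFrom_wordPow] at hw
    obtain ⟨q, hq⟩ := hfix_dvd k hw
    exact ⟨q, by rw [wordPow_mul, hq]⟩
  · rintro ⟨k, rfl⟩
    rw [wordPow_mul, evalFrom_wordPow]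
    exact hdvd_fix _ ⟨k, rfl⟩
end

section
/- Let A be a deterministic complete semi-automaton over a finite alphabet Σ with finite state set Q of cardinality q, and let x, u, y ∈ Σ* be words and n ∈ ℕ. If the word x·u^n·y is synchronizing for A (i.e., |δ(Q, x·u^n·y)| = 1), then there exists n' < 2^q such that x·u^{n'}·y is synchronizing for A. -/
theorem evalFrom_app {α σ : Type*} (M : DFA α σ) (s : σ) (a b : List α) :
    M.evalFrom s (a ++ b) = M.evalFrom (M.evalFrom s a) b := by
  simp [DFA.evalFrom, List.foldl_append]

theorem iter_pigeonhole {β : Type*} [Fintype β] (f : β → β) (s : β) (n : ℕ) :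
    ∃ m, m < Fintype.card β ∧ f^[m] s = f^[n] s := by
  induction n using Nat.strong_induction_on with
  | _ n ih =>
    by_cases hn : n < Fintype.card β
    · exact ⟨n, hn, rfl⟩
    · push_neg at hn
      have : ¬ Function.Injective (fun m : Fin (Fintype.card β + 1) => f^[(m : ℕ)] s) := by
        intro hinj
        have := Fintype.card_le_of_injective _ hinj
        simp at this
      rw [Function.not_injective_iff] at this
      obtain ⟨i, j, hij, hne⟩ := this
      wlog hlt : (i : ℕ) < (j : ℕ) generalizing i j
      · exact this j i hij.symm (Ne.symm hne) (by omega)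
      -- f^[n] s = f^[n - (j - i)] s
      have hj : (j : ℕ) ≤ n := by
        have := j.2
        omega
      have key : f^[n] s = f^[n - (j : ℕ) + (i : ℕ)] s := by
        have h1 : f^[n] s = f^[n - (j : ℕ)] (f^[(j : ℕ)] s) := by
          rw [← Function.iterate_add_apply]
          congr 1
          omega
        rw [h1, ← hij, ← Function.iterate_add_apply]
      have hlt' : n - (j : ℕ) + (i : ℕ) < n := by omega
      obtain ⟨m, hm, hm'⟩ := ih _ hlt'
      exact ⟨m, hm, hm'.trans key.symm⟩

theorem image_wordPow {α σ : Type*} (M : DFA α σ) (u : List α) (k : ℕ) (S : Set σ) :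
    (fun q => M.evalFrom q (wordPow u k)) '' S =
      (fun T => (fun q => M.evalFrom q u) '' T)^[k] S := by
  induction k generalizing S with
  | zero => simp [wordPow]
  | succ k ih =>
    rw [Function.iterate_succ_apply]
    rw [← ih]
    ext t
    simp only [wordPow, Set.mem_image]
    constructor
    · rintro ⟨q, hq, rfl⟩
      exact ⟨M.evalFrom q u, ⟨q, hq, rfl⟩, (evalFrom_app M q u _).symm⟩
    · rintro ⟨r, ⟨q, hq, rfl⟩, rfl⟩
      exact ⟨q, hq, evalFrom_app M q u _⟩

/-- If `x ++ u^n ++ y` synchronizes a deterministic complete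
semi-automaton with `q` states, then some `x ++ u^{n'} ++ y` with `n' < 2^q`
also synchronizes it. -/
theorem stmt_3 {α σ : Type*} [Fintype σ] (M : DFA α σ) (x u y : List α) (n : ℕ)
    (h : Set.ncard ((fun q => M.evalFrom q (x ++ wordPow u n ++ y)) ''
        (Set.univ : Set σ)) = 1) :
    ∃ n' : ℕ, n' < 2 ^ Fintype.card σ ∧
      Set.ncard ((fun q => M.evalFrom q (x ++ wordPow u n' ++ y)) ''
        (Set.univ : Set σ)) = 1 := by
  classical
  set G : Set σ → Set σ := fun T => (fun q => M.evalFrom q u) '' T with hG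
  have decomp : ∀ k : ℕ, (fun q => M.evalFrom q (x ++ wordPow u k ++ y)) ''
      (Set.univ : Set σ) =
      (fun q => M.evalFrom q y) '' (G^[k] ((fun q => M.evalFrom q x) '' Set.univ)) := by
    intro k
    rw [← image_wordPow]
    ext t
    simp only [Set.mem_image, Set.mem_univ, true_and]
    constructor
    · rintro ⟨q, rfl⟩
      exact ⟨M.evalFrom q (x ++ wordPow u k), ⟨M.evalFrom q x, ⟨q, rfl⟩,
        (evalFrom_app M q x _).symm⟩, by
          rw [← evalFrom_app]⟩
    · rintro ⟨r, ⟨r', ⟨q, rfl⟩, rfl⟩, rfl⟩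
      refine ⟨q, ?_⟩
      rw [List.append_assoc, evalFrom_app, evalFrom_app]
  obtain ⟨m, hm, hmeq⟩ := iter_pigeonhole G ((fun q => M.evalFrom q x) '' Set.univ) n
  refine ⟨m, by simpa using hm, ?_⟩
  rw [decomp, hmeq, ← decomp]
  exact h
end

section
/- Let M be a complete DFA over a finite alphabet Σ with finite state set and transition function δ. Then M is polycyclic (for every state p there exists a word u_p with Loop_M(p) ⊆ {u_p}*) if and only if every strongly connected component of M is a single cycle, in the following precise sense: for every state p and all letters a, b ∈ Σ, if δ(p,a) and p are mutually reachable and δ(p,b) and p are mutually reachable, then a = b. -/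
/-- Two states of a DFA are mutually reachable if each can be reached from the
other by reading some word. -/
def MutuallyReachable {α σ : Type*} (M : DFA α σ) (q q' : σ) : Prop :=
  (∃ w : List α, M.evalFrom q w = q') ∧ (∃ w : List α, M.evalFrom q' w = q)

section

variable {α σ : Type*} (M : DFA α σ)

lemma wordPow_nil (k : ℕ) : wordPow ([] : List α) k = [] := by
  induction k with
  | zero => rfl
  | succ k ih => simp [wordPow, ih]

lemma head?_eq_of_cons_eq_wordPow {u x : List α} {a : α} {k : ℕ} (h : a :: x = wordPow u k) :
    u.head? = some a := by
  cases k with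
  | zero => simp [wordPow] at h
  | succ k =>
    cases u with
    | nil => simp [wordPow_nil] at h
    | cons c u => simp_all [wordPow]

lemma mutuallyReachable_step_of_evalFrom_eq {p : σ} {x y : List α} {a : α}
    (h : M.evalFrom p (x ++ a :: y) = p) :
    MutuallyReachable M (M.step (M.evalFrom p x) a) (M.evalFrom p x) := by
  rw [DFA.evalFrom_of_append, DFA.evalFrom_cons] at h
  refine ⟨⟨y ++ x, ?_⟩, ⟨[a], rfl⟩⟩
  rw [DFA.evalFrom_of_append, h]


lemma prefix_of_loops_of_length_le
    (hM : ∀ (q : σ) (a b : α), MutuallyReachable M (M.step q a) q →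
      MutuallyReachable M (M.step q b) q → a = b)
    {p : σ} {x u w : List α} (hu : M.evalFrom p (x ++ u) = p) (hw : M.evalFrom p (x ++ w) = p)
    (hlen : u.length ≤ w.length) : u <+: w := by
  induction u generalizing x w with
  | nil => exact List.nil_prefix
  | cons a u ih =>
    cases w with
    | nil => simp at hlen
    | cons b w =>
      obtain rfl : a = b := hM _ a b (mutuallyReachable_step_of_evalFrom_eq M hu)
        (mutuallyReachable_step_of_evalFrom_eq M hw)
      exact List.cons_prefix_cons.mpr ⟨rfl, ih (x := x ++ [a]) (by simpa using hu)
        (by simpa using hw) (by simpa using hlen)⟩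

lemma exists_eq_wordPow_of_prefix_of_loops {p : σ} {u : List α} (hu : M.evalFrom p u = p)
    (hune : u ≠ []) (hpre : ∀ w, w ≠ [] → M.evalFrom p w = p → u <+: w)
    (w : List α) (hw : M.evalFrom p w = p) : ∃ k, w = wordPow u k := by
  by_cases hwne : w = []
  · exact ⟨0, hwne⟩
  obtain ⟨r, rfl⟩ := hpre w hwne hw
  have hr : M.evalFrom p r = p := by rwa [DFA.evalFrom_of_append, hu] at hw
  obtain ⟨k, rfl⟩ := exists_eq_wordPow_of_prefix_of_loops hu hune hpre r hr
  exact ⟨k + 1, rfl⟩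
termination_by w.length
decreasing_by
  subst_vars
  simpa using List.length_pos_iff.mpr hune

theorem exists_loops_subset_wordPow
    (hM : ∀ (q : σ) (a b : α), MutuallyReachable M (M.step q a) q →
      MutuallyReachable M (M.step q b) q → a = b) (p : σ) :
    ∃ u : List α, {w | M.evalFrom p w = p} ⊆ {w | ∃ k : ℕ, w = wordPow u k} := by
  by_cases hex : {v : List α | v ≠ [] ∧ M.evalFrom p v = p}.Nonempty
  · obtain ⟨u, ⟨hune, hu⟩, humin⟩ := (measure List.length).wf.has_min _ hex
    refine ⟨u, exists_eq_wordPow_of_prefix_of_loops M hu hune fun w hwne hw => ?_⟩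
    exact prefix_of_loops_of_length_le M hM (x := []) hu hw
      (not_lt.mp (humin w ⟨hwne, hw⟩))
  · refine ⟨[], fun w hw => ⟨0, ?_⟩⟩
    by_contra hwne
    exact hex ⟨w, hwne, hw⟩

theorem step_eq_step_of_loops_subset_wordPow
    (hM : ∀ q : σ, ∃ u : List α,
      {w | M.evalFrom q w = q} ⊆ {w | ∃ k : ℕ, w = wordPow u k})
    {p : σ} {a b : α} (ha : MutuallyReachable M (M.step p a) p)
    (hb : MutuallyReachable M (M.step p b) p) : a = b := by
  obtain ⟨u, hu⟩ := hM p
  obtain ⟨⟨va, hva⟩, -⟩ := ha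
  obtain ⟨⟨vb, hvb⟩, -⟩ := hb
  obtain ⟨ka, hka⟩ := hu (show M.evalFrom p (a :: va) = p from hva)
  obtain ⟨kb, hkb⟩ := hu (show M.evalFrom p (b :: vb) = p from hvb)
  simpa using (head?_eq_of_cons_eq_wordPow hka).symm.trans (head?_eq_of_cons_eq_wordPow hkb)

end

theorem stmt_5_general {α : Type*} {σ : Type*} (M : DFA α σ) :
    (∀ p : σ, ∃ u : List α,
        {w : List α | M.evalFrom p w = p} ⊆ {w : List α | ∃ k : ℕ, w = wordPow u k}) ↔
    (∀ p : σ, ∀ a b : α,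
        MutuallyReachable M (M.step p a) p → MutuallyReachable M (M.step p b) p → a = b) :=
  ⟨fun hM _ _ _ => step_eq_step_of_loops_subset_wordPow M hM, exists_loops_subset_wordPow M⟩

/-- A complete DFA with finite state set is polycyclic (every loop
language is contained in the powers of a single word) iff every strongly
connected component is a single cycle: for every state `p` and letters `a, b`,
if both `δ(p,a)` and `δ(p,b)` are mutually reachable with `p`, then `a = b`. -/
theorem stmt_5 {α : Type*} [Fintype α] {σ : Type*} [Fintype σ] (M : DFA α σ) :
    (∀ p : σ, ∃ u : List α,
        {w : List α | M.evalFrom p w = p} ⊆ {w : List α | ∃ k : ℕ, w = wordPow u k}) ↔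
    (∀ p : σ, ∀ a b : α,
        MutuallyReachable M (M.step p a) p → MutuallyReachable M (M.step p b) p → a = b) :=
  stmt_5_general M
end

section
/- Let N be a nondeterministic finite automaton over a finite alphabet Σ with finite state set, let S be a nonempty set of states and u ∈ Σ* a word such that S = N.evalFrom S u (u labels a cycle on S in the power set automaton). Then there exist a state s ∈ S and an integer k ≥ 1 such that s ∈ N.evalFrom {s} (u^k), i.e., u^k labels a cycle at s in N. -/
lemma wordPow_succ' {α : Type*} (u : List α) (n : ℕ) :
    wordPow u (n + 1) = wordPow u n ++ u := by
  induction n with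
  | zero => show u ++ [] = [] ++ u; simp
  | succ n ih => show u ++ wordPow u (n+1) = (u ++ wordPow u n) ++ u
                 rw [ih]; simp

lemma evalFrom_append {α σ : Type*} (N : NFA α σ) (S : Set σ) (x y : List α) :
    N.evalFrom S (x ++ y) = N.evalFrom (N.evalFrom S x) y := by
  simp [NFA.evalFrom, List.foldl_append]

lemma stepSet_mono {α σ : Type*} (N : NFA α σ) {S T : Set σ} (h : S ⊆ T) (a : α) :
    N.stepSet S a ⊆ N.stepSet T a := by
  intro x hx
  simp only [NFA.stepSet, Set.mem_iUnion] at hx ⊢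
  obtain ⟨s, hs, hx⟩ := hx
  exact ⟨s, h hs, hx⟩

lemma evalFrom_mono {α σ : Type*} (N : NFA α σ) {S T : Set σ} (h : S ⊆ T) (w : List α) :
    N.evalFrom S w ⊆ N.evalFrom T w := by
  induction w generalizing S T with
  | nil => simpa using h
  | cons a w ih =>
      simp only [NFA.evalFrom, List.foldl_cons] at *
      exact ih (stepSet_mono N h a)

lemma mem_evalFrom_exists {α σ : Type*} (N : NFA α σ) (S : Set σ) (w : List α) {t : σ}
    (ht : t ∈ N.evalFrom S w) : ∃ s ∈ S, t ∈ N.evalFrom {s} w := by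
  induction w generalizing S with
  | nil => exact ⟨t, by simpa using ht, by simp⟩
  | cons a w ih =>
      simp only [NFA.evalFrom, List.foldl_cons] at ht ⊢
      obtain ⟨x, hx, hxw⟩ := ih _ ht
      simp only [NFA.stepSet, Set.mem_iUnion] at hx
      obtain ⟨s, hs, hx⟩ := hx
      refine ⟨s, hs, evalFrom_mono N (T := N.stepSet {s} a) ?_ w hxw⟩
      intro y hy
      simp only [NFA.stepSet, Set.mem_iUnion]
      exact ⟨s, rfl, by simpa using hy ▸ hx⟩

/-- If a word `u` labels a cycle on a nonempty set `S` of states in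
the power set automaton of an NFA `N`, then some power `u^k` with `k ≥ 1` labels
a cycle at some single state `s ∈ S` in `N`. -/
theorem stmt_8 {α σ : Type*} [Fintype σ] (N : NFA α σ) (S : Set σ) (hS : S.Nonempty)
    (u : List α) (hcycle : S = N.evalFrom S u) :
    ∃ s ∈ S, ∃ k : ℕ, 1 ≤ k ∧ s ∈ N.evalFrom {s} (wordPow u k) := by
  classical
  -- choose a predecessor function
  have hpred : ∀ t ∈ S, ∃ s ∈ S, t ∈ N.evalFrom {s} u := by
    intro t ht
    exact mem_evalFrom_exists N S u (hcycle ▸ ht)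
  choose g hgS hg using hpred
  obtain ⟨t0, ht0⟩ := hS
  -- iterate: define sequence
  let f : ℕ → σ := fun n => Nat.rec t0 (fun _ s => if h : s ∈ S then g s h else s) n
  have hf : ∀ n, f n ∈ S := by
    intro n
    induction n with
    | zero => exact ht0
    | succ n ih => simpa [f, dif_pos ih] using hgS _ ih
  have hstep : ∀ n, f n ∈ N.evalFrom {f (n + 1)} u := by
    intro n
    have := hg _ (hf n)
    simpa [f, dif_pos (hf n)] using this
  -- f n reachable from f (n + m) by u^m
  have hreach : ∀ m n, f n ∈ N.evalFrom {f (n + m)} (wordPow u m) := by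
    intro m
    induction m with
    | zero => intro n; simp [wordPow, NFA.evalFrom]
    | succ m ih =>
        intro n
        rw [wordPow_succ', evalFrom_append]
        refine evalFrom_mono N (S := {f (n + 1)}) ?_ u (hstep n)
        intro y hy
        rw [Set.mem_singleton_iff] at hy
        subst hy
        have := ih (n + 1)
        simpa [Nat.add_right_comm, Nat.add_assoc, Nat.add_comm 1 m] using this
  -- pigeonhole
  obtain ⟨i, j, hij, hfij⟩ := Finite.exists_ne_map_eq_of_infinite f
  rcases hij.lt_or_gt with h | h
  · refine ⟨f i, hf i, j - i, by omega, ?_⟩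
    have := hreach (j - i) i
    rw [show i + (j - i) = j by omega] at this
    rw [hfij] at this ⊢
    exact this
  · refine ⟨f j, hf j, i - j, by omega, ?_⟩
    have := hreach (i - j) j
    rw [show j + (i - j) = i by omega] at this
    rw [hfij] at this
    exact this
end

section
/- Let L ⊆ Σ* be a polycyclic language over a finite alphabet Σ. Then there exists a polycyclic complete DFA M with finite state set accepting L whose start state q₀ is not contained in any cycle, i.e., Loop_M(q₀) = {ε}. -/
/-- A language is polycyclic if it is accepted by a complete DFA with finite
state set all of whose loop languages are contained in the powers of a single
word. -/
def Language.IsPolycyclic {α : Type*} (L : Language α) : Prop :=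
  ∃ (σ : Type) (_ : Fintype σ) (M : DFA α σ),
    (∀ p : σ, ∃ u : List α,
        {w : List α | M.evalFrom p w = p} ⊆ {w : List α | ∃ k : ℕ, w = wordPow u k}) ∧
    M.accepts = L

/-- Add a fresh start state to a DFA. -/
def freshStart {α σ : Type*} (M : DFA α σ) : DFA α (Option σ) where
  step := fun s a => some (M.step (s.getD M.start) a)
  start := none
  accept := {s | s.getD M.start ∈ M.accept}

lemma freshStart_evalFrom_some {α σ : Type*} (M : DFA α σ) (p : σ) (w : List α) :
    (freshStart M).evalFrom (some p) w = some (M.evalFrom p w) := by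
  induction w generalizing p with
  | nil => rfl
  | cons a w ih => simpa [DFA.evalFrom, freshStart] using ih (M.step p a)

lemma freshStart_evalFrom_none {α σ : Type*} (M : DFA α σ) (a : α) (w : List α) :
    (freshStart M).evalFrom none (a :: w) = some (M.evalFrom M.start (a :: w)) := by
  simpa [DFA.evalFrom, freshStart] using freshStart_evalFrom_some M (M.step M.start a) w

/-- Every polycyclic language is accepted by a polycyclic complete
DFA with finite state set whose start state lies on no cycle, i.e., whose start
state has loop language `{ε}`. -/
theorem stmt_9 {α : Type*} [Fintype α] (L : Language α) (h : L.IsPolycyclic) :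
    ∃ (σ : Type) (_ : Fintype σ) (M : DFA α σ),
      (∀ p : σ, ∃ u : List α,
          {w : List α | M.evalFrom p w = p} ⊆ {w : List α | ∃ k : ℕ, w = wordPow u k}) ∧
      M.accepts = L ∧
      {w : List α | M.evalFrom M.start w = M.start} = {([] : List α)} := by
  obtain ⟨σ, inst, M, hloop, hacc⟩ := h
  haveI := inst
  refine ⟨Option σ, inferInstance, freshStart M, ?_, ?_, ?_⟩
  · rintro (_ | p)
    · refine ⟨[], fun w hw => ⟨0, ?_⟩⟩
      cases w with
      | nil => rfl
      | cons a w =>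
        exfalso
        have := hw
        simp only [Set.mem_setOf_eq] at this
        rw [show (freshStart M).evalFrom none (a :: w) = _ from freshStart_evalFrom_none M a w] at this
        simp at this
    · obtain ⟨u, hu⟩ := hloop p
      refine ⟨u, fun w hw => hu ?_⟩
      simp only [Set.mem_setOf_eq, freshStart_evalFrom_some, Option.some_inj] at hw
      exact hw
  · rw [← hacc]
    ext w
    cases w with
    | nil =>
      simp [DFA.mem_accepts, DFA.eval, DFA.evalFrom, freshStart]
    | cons a w =>
      show ((freshStart M).evalFrom none (a :: w)).getD M.start ∈ M.accept ↔ _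
      rw [freshStart_evalFrom_none]
      simp [DFA.mem_accepts, DFA.eval]
  · ext w
    cases w with
    | nil => simp [DFA.evalFrom]
    | cons a w =>
      simp only [Set.mem_setOf_eq, Set.mem_singleton_iff]
      constructor
      · intro hw
        have : (freshStart M).start = (none : Option σ) := rfl
        rw [this] at hw
        rw [freshStart_evalFrom_none] at hw
        exact absurd hw (by simp)
      · intro hw; exact absurd hw (by simp)
end

section
/- If U, V ⊆ Σ* are polycyclic languages over a finite alphabet Σ, then their concatenation U·V = {uv | u ∈ U, v ∈ V} is polycyclic. -/
section aux
variable {α : Type*} {σ τ : Type} (MU : DFA α σ) (MV : DFA α τ)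

/-- Subset construction for concatenation. -/
def concatDFA : DFA α (σ × Set τ) where
  step := fun s a =>
    (MU.step s.1 a,
      (fun q => MV.step q a) '' s.2 ∪ {q | q = MV.start ∧ MU.step s.1 a ∈ MU.accept})
  start := (MU.start, {q | q = MV.start ∧ MU.start ∈ MU.accept})
  accept := {s | ∃ q ∈ s.2, q ∈ MV.accept}

lemma concatDFA_fst (w : List α) : ∀ s : σ × Set τ,
    ((concatDFA MU MV).evalFrom s w).1 = MU.evalFrom s.1 w := by
  induction w with
  | nil => intro s; rfl
  | cons a w ih => intro s; exact ih _

lemma concatDFA_snd (w : List α) : ∀ (p : σ) (S : Set τ),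
    ((concatDFA MU MV).evalFrom (p, S) w).2 =
      (fun q => MV.evalFrom q w) '' S ∪
        {r | ∃ x y, x ++ y = w ∧ x ≠ [] ∧ MU.evalFrom p x ∈ MU.accept ∧
          MV.evalFrom MV.start y = r} := by
  induction w with
  | nil =>
    intro p S
    ext r
    simp [DFA.evalFrom]
  | cons a w ih =>
    intro p S
    have h1 : (concatDFA MU MV).evalFrom (p, S) (a :: w) =
        (concatDFA MU MV).evalFrom
          (MU.step p a,
            (fun q => MV.step q a) '' S ∪ {q | q = MV.start ∧ MU.step p a ∈ MU.accept}) w := rfl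
    rw [h1, ih]
    ext r
    simp only [Set.image_union, Set.mem_union, Set.mem_image, Set.mem_setOf_eq,
      Set.image_image]
    constructor
    · rintro ((⟨q, hq, rfl⟩ | ⟨q, ⟨rfl, hacc⟩, rfl⟩) | ⟨x, y, hxy, hx, hax, rfl⟩)
      · exact Or.inl ⟨q, hq, rfl⟩
      · exact Or.inr ⟨[a], w, rfl, by simp, hacc, rfl⟩
      · exact Or.inr ⟨a :: x, y, by simp [hxy], by simp, hax, rfl⟩
    · rintro (⟨q, hq, rfl⟩ | ⟨x, y, hxy, hx, hax, rfl⟩)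
      · exact Or.inl (Or.inl ⟨q, hq, rfl⟩)
      · rcases x with _ | ⟨b, x⟩
        · exact absurd rfl hx
        · obtain ⟨rfl, hw⟩ : b = a ∧ x ++ y = w := by
            simpa using hxy
          rcases x with _ | ⟨c, x⟩
          · simp only [List.nil_append] at hw
            subst hw
            exact Or.inl (Or.inr ⟨MV.start, ⟨rfl, hax⟩, rfl⟩)
          · exact Or.inr ⟨c :: x, y, hw, by simp, hax, rfl⟩

lemma concatDFA_accepts : (concatDFA MU MV).accepts = MU.accepts * MV.accepts := by
  ext w
  rw [DFA.mem_accepts, Language.mem_mul]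
  show (∃ q ∈ ((concatDFA MU MV).evalFrom (concatDFA MU MV).start w).2, q ∈ MV.accept) ↔ _
  have hst : (concatDFA MU MV).start =
      ((MU.start, {q | q = MV.start ∧ MU.start ∈ MU.accept}) : σ × Set τ) := rfl
  rw [hst, concatDFA_snd]
  constructor
  · rintro ⟨q, hq | hq, hqa⟩
    · obtain ⟨q', ⟨rfl, hacc⟩, rfl⟩ := hq
      exact ⟨[], (DFA.mem_accepts _).2 hacc, w, (DFA.mem_accepts _).2 hqa, rfl⟩
    · obtain ⟨x, y, hxy, -, hx, rfl⟩ := hq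
      exact ⟨x, (DFA.mem_accepts _).2 hx, y, (DFA.mem_accepts _).2 hqa, hxy⟩
  · rintro ⟨x, hx, y, hy, rfl⟩
    rw [DFA.mem_accepts] at hx hy
    rcases eq_or_ne x [] with rfl | hne
    · exact ⟨MV.evalFrom MV.start y, Or.inl ⟨MV.start, ⟨rfl, hx⟩, rfl⟩, hy⟩
    · exact ⟨MV.evalFrom MV.start y, Or.inr ⟨x, y, rfl, hne, hx, rfl⟩, hy⟩

end aux

/-- The concatenation of two polycyclic languages is polycyclic. -/
theorem stmt_10 {α : Type*} [Fintype α] (U V : Language α)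
    (hU : U.IsPolycyclic) (hV : V.IsPolycyclic) : (U * V).IsPolycyclic := by
  obtain ⟨σ, _, MU, hUloop, hUacc⟩ := hU
  obtain ⟨τ, _, MV, hVloop, hVacc⟩ := hV
  refine ⟨σ × Set τ, inferInstance, concatDFA MU MV, ?_, ?_⟩
  · rintro ⟨p, S⟩
    obtain ⟨u, hu⟩ := hUloop p
    refine ⟨u, fun w hw => hu ?_⟩
    have := congrArg Prod.fst hw
    rwa [concatDFA_fst] at this
  · rw [concatDFA_accepts, hUacc, hVacc]
end

section
/- If U, V ⊆ Σ* are polycyclic languages over a finite alphabet Σ, then their union U ∪ V is polycyclic. -/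
/-- The product DFA accepting the union. -/
def prodDFA {α σ₁ σ₂ : Type*} (M₁ : DFA α σ₁) (M₂ : DFA α σ₂) : DFA α (σ₁ × σ₂) where
  step := fun p a => (M₁.step p.1 a, M₂.step p.2 a)
  start := (M₁.start, M₂.start)
  accept := {p | p.1 ∈ M₁.accept ∨ p.2 ∈ M₂.accept}

theorem prodDFA_evalFrom {α σ₁ σ₂ : Type*} (M₁ : DFA α σ₁) (M₂ : DFA α σ₂)
    (p : σ₁ × σ₂) (w : List α) :
    (prodDFA M₁ M₂).evalFrom p w = (M₁.evalFrom p.1 w, M₂.evalFrom p.2 w) := by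
  induction w generalizing p with
  | nil => rfl
  | cons a w ih =>
      simp only [DFA.evalFrom, List.foldl_cons] at *
      exact ih _

/-- The union of two polycyclic languages is polycyclic. -/
theorem stmt_12 {α : Type*} [Fintype α] (U V : Language α)
    (hU : U.IsPolycyclic) (hV : V.IsPolycyclic) : (U + V).IsPolycyclic := by
  obtain ⟨σ₁, F₁, M₁, h₁, hA₁⟩ := hU
  obtain ⟨σ₂, F₂, M₂, h₂, hA₂⟩ := hV
  refine ⟨σ₁ × σ₂, @instFintypeProd _ _ F₁ F₂, prodDFA M₁ M₂, ?_, ?_⟩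
  · intro p
    obtain ⟨u, hu⟩ := h₁ p.1
    refine ⟨u, fun w hw => ?_⟩
    apply hu
    have := hw
    simp only [Set.mem_setOf_eq, prodDFA_evalFrom] at this
    exact congrArg Prod.fst this
  · ext w
    have : w ∈ (prodDFA M₁ M₂).accepts ↔ w ∈ M₁.accepts ∨ w ∈ M₂.accepts := by
      simp only [DFA.mem_accepts, DFA.eval, prodDFA_evalFrom]
      rfl
    rw [this, hA₁, hA₂]
    exact (Language.mem_add U V w).symm
end

section
/- Let M be a polycyclic complete DFA over a finite alphabet Σ with state set P of cardinality m, and for each state p let u_p ∈ Σ* be a word with Loop_M(p) ⊆ {u_p}*. Then every word w ∈ L(M) can be written as w = u_{p_1}^{n_1} · v_1 · u_{p_2}^{n_2} · v_2 ⋯ v_{m−1} · u_{p_m}^{n_m} for some states p_1, …, p_m ∈ P, natural numbers n_1, …, n_m ∈ ℕ, and words v_1, …, v_{m−1} ∈ Σ* each of length strictly less than m. -/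
/-!
Split a word at the last return of the run to the start state `q`: the prefix is a loop
at `q`, hence a power of `u q`. After one further letter the run never visits `q` again, so the
rest is decomposed in the same way by a run confined to one state fewer. Every block thus uses up
a state, which bounds the number of blocks by the number of states.
-/

namespace DFA

variable {α σ : Type*} (M : DFA α σ)

theorem exists_append_lastReturn (q : σ) (w : List α) :
    ∃ x y, w = x ++ y ∧ M.evalFrom q x = q ∧
      ∀ z, z <+: y → z ≠ [] → M.evalFrom q (x ++ z) ≠ q := by
  induction w using List.reverseRecOn with
  | nil => exact ⟨[], [], rfl, rfl, fun z hz hne => (hne (List.prefix_nil.mp hz)).elim⟩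
  | append_singleton w a ih =>
    by_cases hret : M.evalFrom q (w ++ [a]) = q
    · exact ⟨w ++ [a], [], by simp, hret, fun z hz hne => (hne (List.prefix_nil.mp hz)).elim⟩
    obtain ⟨x, y, rfl, hx, hy⟩ := ih
    refine ⟨x, y ++ [a], by simp, hx, fun z hz hne => ?_⟩
    rcases List.prefix_concat_iff.mp hz with rfl | hz
    · simpa using hret
    · exact hy z hz hne

variable (u : σ → List α)

theorem exists_blocks [Fintype σ]
    (hpoly : ∀ p : σ,
        {w : List α | M.evalFrom p w = p} ⊆ {w : List α | ∃ k : ℕ, w = wordPow (u p) k})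
    (S : Finset σ) (q : σ) (w : List α) (hS : ∀ z, z <+: w → M.evalFrom q z ∈ S) :
    ∃ (L : List (σ × ℕ × List α)) (p : σ) (n : ℕ), L.length < S.card ∧
      (∀ x ∈ L, x.2.2.length < Fintype.card σ) ∧
      w = (L.map fun x => wordPow (u x.1) x.2.1 ++ x.2.2).flatten ++ wordPow (u p) n := by
  induction S using Finset.strongInduction generalizing q w with
  | H S ih =>
  classical
  have hqS : q ∈ S := hS [] List.nil_prefix
  obtain ⟨x, y, rfl, hx, hy⟩ := M.exists_append_lastReturn q w
  obtain ⟨k, rfl⟩ := hpoly q hx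
  rcases y with _ | ⟨a, y⟩
  · exact ⟨[], q, k, Finset.card_pos.mpr ⟨q, hqS⟩, by simp, by simp⟩
  have hleave : ∀ z, z <+: y → M.evalFrom (M.step q a) z ≠ q := fun z hz => by
    simpa [evalFrom_of_append, hx] using hy (a :: z) (List.cons_prefix_cons.mpr ⟨rfl, hz⟩)
  have hrest : ∀ z, z <+: y → M.evalFrom (M.step q a) z ∈ S.erase q := fun z hz => by
    refine Finset.mem_erase.mpr ⟨hleave z hz, ?_⟩
    simpa [evalFrom_of_append, hx] using
      hS (wordPow (u q) k ++ a :: z) (List.prefix_append_right_inj _ |>.mpr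
        (List.cons_prefix_cons.mpr ⟨rfl, hz⟩))
  obtain ⟨L, p, n, hlen, hv, hy⟩ := ih _ (Finset.erase_ssubset hqS) _ _ hrest
  have htwo : 1 < Fintype.card σ := Fintype.one_lt_card_iff.mpr ⟨_, _, hleave [] y.nil_prefix⟩
  refine ⟨(q, k, [a]) :: L, p, n, ?_, ?_, ?_⟩
  · rw [Finset.card_erase_of_mem hqS] at hlen
    simp only [List.length_cons]
    omega
  · simpa [htwo] using hv
  · simp [hy]

end DFA

theorem exists_ofFn_blocks_of_length_lt {α σ : Type*} (u : σ → List α) {m : ℕ} (hm : 0 < m)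
    (L : List (σ × ℕ × List α)) (p : σ) (n : ℕ) (hlen : L.length < m)
    (hv : ∀ x ∈ L, x.2.2.length < m) :
    ∃ (p' : Fin m → σ) (n' : Fin m → ℕ) (v : Fin m → List α),
      (∀ i, (v i).length < m) ∧ v ⟨m - 1, Nat.sub_lt hm Nat.one_pos⟩ = [] ∧
      (L.map fun x => wordPow (u x.1) x.2.1 ++ x.2.2).flatten ++ wordPow (u p) n =
        (List.ofFn (fun i => wordPow (u (p' i)) (n' i) ++ v i)).flatten := by
  set B := List.replicate (m - 1 - L.length) (p, 0, []) ++ L ++ [(p, n, [])]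
  have hB : B.length = m := by
    simp only [B, List.length_append, List.length_replicate, List.length_singleton]
    omega
  have hofn : List.ofFn (fun i : Fin m => B[i.1]) = B :=
    List.ext_getElem (by simp [hB]) (by simp)
  have hvB : ∀ x ∈ B, x.2.2.length < m := by
    intro x hx
    simp only [B, List.mem_append, List.mem_replicate, List.mem_singleton] at hx
    rcases hx with (⟨-, rfl⟩ | hx) | rfl
    · exact hm
    · exact hv x hx
    · exact hm
  refine ⟨fun i => B[i.1].1, fun i => B[i.1].2.1, fun i => B[i.1].2.2, fun i => ?_, ?_, ?_⟩
  · exact hvB _ (List.getElem_mem _)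
  · exact congrArg (fun x : σ × ℕ × List α => x.2.2)
      (List.getElem_concat_length (by simp; omega) _)
  · calc _ = (B.map fun x => wordPow (u x.1) x.2.1 ++ x.2.2).flatten := by simp [B, wordPow]
      _ = _ := by
          conv_lhs => rw [← hofn]
          rw [List.map_ofFn]
          rfl

theorem stmt_16_general {α : Type*} {σ : Type*} [Fintype σ] (M : DFA α σ)
    (u : σ → List α)
    (hpoly : ∀ p : σ,
        {w : List α | M.evalFrom p w = p} ⊆ {w : List α | ∃ k : ℕ, w = wordPow (u p) k})
    (w : List α) :
    ∃ (p : Fin (Fintype.card σ) → σ) (n : Fin (Fintype.card σ) → ℕ)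
      (v : Fin (Fintype.card σ) → List α),
      (∀ i, (v i).length < Fintype.card σ) ∧
      v ⟨Fintype.card σ - 1,
          Nat.sub_lt (Fintype.card_pos_iff.mpr ⟨M.start⟩) Nat.one_pos⟩ = [] ∧
      w = (List.ofFn (fun i => wordPow (u (p i)) (n i) ++ v i)).flatten := by
  obtain ⟨L, p, n, hlen, hv, rfl⟩ := M.exists_blocks u hpoly Finset.univ M.start w (by simp)
  rw [Finset.card_univ] at hlen
  exact exists_ofFn_blocks_of_length_lt u (Fintype.card_pos_iff.mpr ⟨M.start⟩) L p n hlen hv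

/-- Let `M` be a polycyclic complete DFA with `m` states, with a
word `u p` for each state `p` such that every loop word at `p` is a power of
`u p`. Then every accepted word `w` factors as
`u_{p_1}^{n_1} · v_1 · u_{p_2}^{n_2} · v_2 ⋯ v_{m−1} · u_{p_m}^{n_m}` where each
`v_i` has length `< m` (the last separator is forced to be empty, so that there
are exactly `m` power-blocks and `m − 1` separators). -/
theorem stmt_16 {α : Type*} [Fintype α] {σ : Type*} [Fintype σ] (M : DFA α σ)
    (u : σ → List α)
    (hpoly : ∀ p : σ,
        {w : List α | M.evalFrom p w = p} ⊆ {w : List α | ∃ k : ℕ, w = wordPow (u p) k})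
    (w : List α) (hw : w ∈ M.accepts) :
    ∃ (p : Fin (Fintype.card σ) → σ) (n : Fin (Fintype.card σ) → ℕ)
      (v : Fin (Fintype.card σ) → List α),
      (∀ i, (v i).length < Fintype.card σ) ∧
      v ⟨Fintype.card σ - 1,
          Nat.sub_lt (Fintype.card_pos_iff.mpr ⟨M.start⟩) Nat.one_pos⟩ = [] ∧
      w = (List.ofFn (fun i => wordPow (u (p i)) (n i) ++ v i)).flatten :=
  stmt_16_general M u hpoly w
end
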